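/- arXiv:1111.0146 — 2 statements merged into one kernel-verified Lean document; each statement's English description precedes it below -/
import Mathlib

section
/- For all n ∈ ℕ, Σ_{r=0}^{n} v(r)·D(n,r) = 16^n. -/
open Finset

noncomputable def Aseq (n : ℕ) (k : ℤ) : ℤ := ∑ i ∈ Finset.Icc (0 : ℤ) k, (n.choose i.toNat : ℤ)

lemma Aseq_neg (n : ℕ) {k : ℤ} (h : k < 0) : Aseq n k = 0 := by
  rw [Aseq, Finset.Icc_eq_empty (by omega), Finset.sum_empty]

lemma Aseq_coe (n K : ℕ) : Aseq n (K : ℤ) = ∑ i ∈ Finset.range (K + 1), (n.choose i : ℤ) := by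
  rw [Aseq]
  refine Finset.sum_nbij' (fun i => i.toNat) (fun j => (j : ℤ)) ?_ ?_ ?_ ?_ ?_
  · intro a ha; simp only [Finset.mem_Icc] at ha; simp only [Finset.mem_range]; omega
  · intro a ha; simp only [Finset.mem_range] at ha; simp only [Finset.mem_Icc]; omega
  · intro a ha; simp only [Finset.mem_Icc] at ha; omega
  · intro a ha; simp
  · intro a ha; simp

lemma sum_choose_succ (n K : ℕ) :
    ∑ i ∈ Finset.range (K + 2), ((n+1).choose i : ℤ) =
      ∑ i ∈ Finset.range (K + 2), (n.choose i : ℤ) +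
      ∑ i ∈ Finset.range (K + 1), (n.choose i : ℤ) := by
  rw [Finset.sum_range_succ' (fun i => ((n+1).choose i : ℤ)),
      Finset.sum_range_succ' (fun i => ((n).choose i : ℤ))]
  simp only [Nat.choose_succ_succ, Nat.cast_add, Nat.choose_zero_right, Nat.cast_one,
    Finset.sum_add_distrib]
  ring

lemma Aseq_succ (n : ℕ) (k : ℤ) : Aseq (n+1) k = Aseq n k + Aseq n (k - 1) := by
  rcases lt_or_ge k 0 with h | h
  · rw [Aseq_neg _ h, Aseq_neg _ h, Aseq_neg _ (by omega)]; ring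
  rcases lt_or_ge k 1 with h1 | h1
  · have hk : k = 0 := by omega
    rw [hk, Aseq_neg n (show (0:ℤ)-1 < 0 by norm_num)]
    simp [Aseq]
  · obtain ⟨K, rfl⟩ : ∃ K : ℕ, k = (K : ℤ) + 1 := ⟨(k-1).toNat, by omega⟩
    have h2 : (K : ℤ) + 1 = ((K + 1 : ℕ) : ℤ) := by push_cast; ring
    rw [h2, show (((K + 1 : ℕ) : ℤ) - 1) = (K : ℤ) by push_cast; ring, Aseq_coe, Aseq_coe, Aseq_coe]
    exact sum_choose_succ n K

lemma central_even_nat (m : ℕ) :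
    (∑ i ∈ Finset.range (m + 1), (2*m).choose i) + ∑ i ∈ Finset.range m, (2*m).choose i
      = 2 ^ (2*m) := by
  have h := Nat.sum_range_choose (2*m)
  have h2 : ∑ i ∈ Finset.range (2*m + 1), (2*m).choose i
      = (∑ i ∈ Finset.range (m+1), (2*m).choose i)
        + ∑ i ∈ Finset.range m, (2*m).choose (m + 1 + i) := by
    rw [show 2*m + 1 = (m+1) + m by ring, Finset.sum_range_add]
  have h3 : ∀ i ∈ Finset.range m, (2*m).choose (m + 1 + i) = (2*m).choose (m - 1 - i) := by
    intro i hi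
    simp only [Finset.mem_range] at hi
    rw [← Nat.choose_symm (by omega : m + 1 + i ≤ 2*m), show 2*m - (m+1+i) = m - 1 - i by omega]
  rw [Finset.sum_congr rfl h3, Finset.sum_range_reflect (fun i => (2*m).choose i) m] at h2
  omega

lemma central_even (m : ℕ) :
    Aseq (2*m) m + Aseq (2*m) ((m : ℤ) - 1) = 2 ^ (2*m) := by
  cases m with
  | zero => simp [Aseq_neg 0 (show (0:ℤ)-1 < 0 by norm_num), Aseq]
  | succ m' =>
    rw [show ((m'+1 : ℕ) : ℤ) - 1 = ((m' : ℕ) : ℤ) by push_cast; ring, Aseq_coe, Aseq_coe]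
    exact_mod_cast central_even_nat (m' + 1)

lemma central_odd (m : ℕ) : 2 * Aseq (2*m+1) m = 2 ^ (2*m+1) := by
  rw [Aseq_coe]
  have := Nat.sum_range_choose_halfway m
  have h2 : ∑ i ∈ Finset.range (m+1), ((2*m+1).choose i : ℤ) = 4 ^ m := by
    exact_mod_cast this
  rw [h2]
  rw [show (4:ℤ) = 2^2 by norm_num, ← pow_mul, pow_succ]
  ring

/-- The integer sequence `v`: `v(0)=1`, `v(1)=14`, `v(2)=224`, and for `m ≥ 2`,
`v(m+1) = 16·v(m) − v(m−1)`. -/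
def vseq : ℕ → ℤ
  | 0 => 1
  | 1 => 14
  | 2 => 224
  | (m + 3) => 16 * vseq (m + 2) - vseq (m + 1)

/-- `k(n, λ)` from Proposition `prop:sbafacts` of the paper. -/
def kfun (n : ℕ) (l : ℤ) : ℤ :=
  if l = 0 then (n : ℤ)
  else if ((n : ℤ) + l) % 2 = 0 then
    (if l < 0 then ((n : ℤ) + l) / 2 else ((n : ℤ) - l - 2) / 2)
  else ((n : ℤ) - |l| - 1) / 2

/-- `D(n, r)`: for `r = 0` it is `2 ^ n`, and for `r ≥ 1` it is
`Σ_{i=0}^{k(n,r)} C(n,i) + Σ_{i=0}^{k(n,−r)} C(n,i)`, where a sum with a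
negative upper limit is empty (hence `0`). -/
noncomputable def Dfun (n r : ℕ) : ℤ :=
  if r = 0 then 2 ^ n
  else (∑ i ∈ Finset.Icc (0 : ℤ) (kfun n (r : ℤ)), (n.choose i.toNat : ℤ)) +
       (∑ i ∈ Finset.Icc (0 : ℤ) (kfun n (-(r : ℤ))), (n.choose i.toNat : ℤ))


lemma kfun_pos_eq (n r : ℕ) (hr : 1 ≤ r) {c : ℤ}
    (h1 : ((n:ℤ) + r) % 2 = 0 → (n:ℤ) - r - 2 = 2*c)
    (h2 : ((n:ℤ) + r) % 2 = 1 → (n:ℤ) - r - 1 = 2*c) :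
    kfun n (r : ℤ) = c := by
  have habs : |(r:ℤ)| = (r:ℤ) := by simp
  unfold kfun
  rw [habs]
  split_ifs <;> omega

lemma kfun_neg_eq (n r : ℕ) (hr : 1 ≤ r) {c : ℤ}
    (h1 : ((n:ℤ) + r) % 2 = 0 → (n:ℤ) - r = 2*c)
    (h2 : ((n:ℤ) + r) % 2 = 1 → (n:ℤ) - r - 1 = 2*c) :
    kfun n (-(r : ℤ)) = c := by
  have habs : |(-(r:ℤ))| = (r:ℤ) := by simp
  unfold kfun
  rw [habs]
  split_ifs <;> omega

lemma Dfun_zero (n : ℕ) : Dfun n 0 = 2 ^ n := rfl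

lemma Dfun_succ (n r : ℕ) :
    Dfun n (r+1) = Aseq n (kfun n ((r+1 : ℕ) : ℤ)) + Aseq n (kfun n (-((r+1 : ℕ) : ℤ))) := by
  simp [Dfun, Aseq]

lemma kfun_neg_of_big (n r : ℕ) (h : n + 1 ≤ r) : kfun n (r : ℤ) < 0 := by
  have habs : |(r:ℤ)| = (r:ℤ) := by simp
  have hn : (n:ℤ) + 1 ≤ (r:ℤ) := by exact_mod_cast h
  unfold kfun
  rw [habs]
  split_ifs <;> omega

lemma kfun_neg_of_big' (n r : ℕ) (h : n + 1 ≤ r) : kfun n (-(r : ℤ)) < 0 := by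
  have habs : |(-(r:ℤ))| = (r:ℤ) := by simp
  have hn : (n:ℤ) + 1 ≤ (r:ℤ) := by exact_mod_cast h
  unfold kfun
  rw [habs]
  split_ifs <;> omega

lemma Dfun_vanish (n r : ℕ) (h : n + 1 ≤ r) : Dfun n r = 0 := by
  obtain ⟨r', rfl⟩ : ∃ r', r = r' + 1 := ⟨r - 1, by omega⟩
  rw [Dfun_succ, Aseq_neg _ (kfun_neg_of_big n _ h), Aseq_neg _ (kfun_neg_of_big' n _ h)]
  ring

lemma Drec (n r : ℕ) : Dfun (n+1) (r+1) = Dfun n r + Dfun n (r+2) := by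
  cases r with
  | zero =>
    rcases Nat.even_or_odd n with ⟨m, hm⟩ | ⟨m, hm⟩
    · -- n = m + m
      have hn : (n:ℤ) = 2*m := by exact_mod_cast (by omega : n = 2*m)
      rw [Dfun_succ (n+1) 0, Dfun_succ n 1, Dfun_zero]
      rw [kfun_pos_eq (n+1) 1 le_rfl (c := (m:ℤ) - 1) (by push_cast; omega) (by push_cast; omega)]
      rw [kfun_neg_eq (n+1) 1 le_rfl (c := (m:ℤ)) (by push_cast; omega) (by push_cast; omega)]
      rw [kfun_pos_eq n 2 (by omega) (c := (m:ℤ) - 2) (by push_cast; omega) (by push_cast; omega)]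
      rw [kfun_neg_eq n 2 (by omega) (c := (m:ℤ) - 1) (by push_cast; omega) (by push_cast; omega)]
      rw [Aseq_succ, Aseq_succ]
      have hc := central_even m
      rw [show 2*m = n by omega] at hc
      rw [show (m:ℤ) - 1 - 1 = (m:ℤ) - 2 by ring]
      linear_combination hc
    · -- n = 2m+1
      have hn : (n:ℤ) = 2*m + 1 := by exact_mod_cast hm
      rw [Dfun_succ (n+1) 0, Dfun_succ n 1, Dfun_zero]
      rw [kfun_pos_eq (n+1) 1 le_rfl (c := (m:ℤ)) (by push_cast; omega) (by push_cast; omega)]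
      rw [kfun_neg_eq (n+1) 1 le_rfl (c := (m:ℤ)) (by push_cast; omega) (by push_cast; omega)]
      rw [kfun_pos_eq n 2 (by omega) (c := (m:ℤ) - 1) (by push_cast; omega) (by push_cast; omega)]
      rw [kfun_neg_eq n 2 (by omega) (c := (m:ℤ) - 1) (by push_cast; omega) (by push_cast; omega)]
      rw [Aseq_succ]
      have hc := central_odd m
      rw [show 2*m+1 = n by omega] at hc
      rw [show (m:ℤ) - 1 = (m:ℤ) - 1 by ring]
      linear_combination hc
  | succ r' =>
    rcases Int.even_or_odd ((n:ℤ) + r') with ⟨j, hj⟩ | ⟨j, hj⟩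
    · -- n + r' = 2j even
      set c : ℤ := j - r' with hc
      rw [show r' + 1 + 1 = r' + 2 by ring, show r' + 2 + 1 = r' + 3 by ring] at *
      rw [Dfun_succ (n+1) (r'+1), Dfun_succ n r', Dfun_succ n (r'+2)]
      rw [kfun_pos_eq (n+1) (r'+2) (by omega) (c := c - 1) (by push_cast; omega) (by push_cast; omega)]
      rw [kfun_neg_eq (n+1) (r'+2) (by omega) (c := c - 1) (by push_cast; omega) (by push_cast; omega)]
      rw [kfun_pos_eq n (r'+1) (by omega) (c := c - 1) (by push_cast; omega) (by push_cast; omega)]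
      rw [kfun_neg_eq n (r'+1) (by omega) (c := c - 1) (by push_cast; omega) (by push_cast; omega)]
      rw [kfun_pos_eq n (r'+3) (by omega) (c := c - 2) (by push_cast; omega) (by push_cast; omega)]
      rw [kfun_neg_eq n (r'+3) (by omega) (c := c - 2) (by push_cast; omega) (by push_cast; omega)]
      simp only [Aseq_succ, show c - 1 - 1 = c - 2 by ring]
      ring
    · -- n + r' = 2j + 1 odd
      set d : ℤ := j - r' - 1 with hd
      rw [Dfun_succ (n+1) (r'+1), Dfun_succ n r', Dfun_succ n (r'+2)]
      rw [kfun_pos_eq (n+1) (r'+2) (by omega) (c := d) (by push_cast; omega) (by push_cast; omega)]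
      rw [kfun_neg_eq (n+1) (r'+2) (by omega) (c := d + 1) (by push_cast; omega) (by push_cast; omega)]
      rw [kfun_pos_eq n (r'+1) (by omega) (c := d) (by push_cast; omega) (by push_cast; omega)]
      rw [kfun_neg_eq n (r'+1) (by omega) (c := d + 1) (by push_cast; omega) (by push_cast; omega)]
      rw [kfun_pos_eq n (r'+3) (by omega) (c := d - 1) (by push_cast; omega) (by push_cast; omega)]
      rw [kfun_neg_eq n (r'+3) (by omega) (c := d) (by push_cast; omega) (by push_cast; omega)]
      simp only [Aseq_succ, show d + 1 - 1 = d by ring]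
      ring


/-- For all `n ∈ ℕ`, `Σ_{r=0}^{n} v(r)·D(n,r) = 16^n`. -/
theorem sum_vseq_mul_Dfun (n : ℕ) :
    ∑ r ∈ Finset.range (n + 1), vseq r * Dfun n r = 16 ^ n := by
  induction n with
  | zero => simp [vseq, Dfun]
  | succ n ih =>
    -- w r : reindexed second sum
    set w : ℕ → ℤ := fun r => if 2 ≤ r then vseq (r-1) * Dfun n r else 0 with hwdef
    have hw2 : ∀ r : ℕ, w (r+2) = vseq (r+1) * Dfun n (r+2) := by
      intro r; simp [hwdef]
    have hU2 : ∑ r ∈ Finset.range (n+1), vseq (r+1) * Dfun n (r+2)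
        = ∑ r ∈ Finset.range (n+1), w r := by
      have e1 : ∑ r ∈ Finset.range (n+3), w r
          = ∑ r ∈ Finset.range (n+1), w (r+2) + w 1 + w 0 := by
        rw [Finset.sum_range_succ' w (n+2), Finset.sum_range_succ' (fun r => w (r+1)) (n+1)]
      have e2 : ∑ r ∈ Finset.range (n+3), w r
          = ∑ r ∈ Finset.range (n+1), w r + w (n+1) + w (n+2) := by
        rw [Finset.sum_range_succ w (n+2), Finset.sum_range_succ w (n+1)]
      have z1 : w 1 = 0 := by simp [hwdef]
      have z0 : w 0 = 0 := by simp [hwdef]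
      have zn1 : w (n+1) = 0 := by
        simp only [hwdef]
        split_ifs with h
        · rw [Dfun_vanish n (n+1) le_rfl]; ring
        · rfl
      have zn2 : w (n+2) = 0 := by
        simp only [hwdef]
        split_ifs with h
        · rw [Dfun_vanish n (n+2) (by omega)]; ring
        · rfl
      calc ∑ r ∈ Finset.range (n+1), vseq (r+1) * Dfun n (r+2)
          = ∑ r ∈ Finset.range (n+1), w (r+2) := by
            refine Finset.sum_congr rfl fun r _ => ?_
            rw [hw2]
        _ = ∑ r ∈ Finset.range (n+1), w r := by linarith [e1, e2, z1, z0, zn1, zn2]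
    -- pointwise recurrence
    have hpt : ∀ r : ℕ, vseq (r+2) * Dfun n (r+1) + w (r+1)
        = 16 * (vseq (r+1) * Dfun n (r+1)) := by
      intro r
      cases r with
      | zero =>
        have : w 1 = 0 := by simp [hwdef]
        rw [this, show vseq 2 = 224 from rfl, show vseq 1 = 14 from rfl]
        ring
      | succ r'' =>
        rw [hw2 r'', show vseq (r''+1+2) = 16 * vseq (r''+1+1) - vseq (r''+1) from rfl]
        ring
    rw [Finset.sum_range_succ']
    have hD : ∀ r ∈ Finset.range (n+1), vseq (r+1) * Dfun (n+1) (r+1)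
        = vseq (r+1) * Dfun n r + vseq (r+1) * Dfun n (r+2) := by
      intro r _; rw [Drec]; ring
    rw [Finset.sum_congr rfl hD, Finset.sum_add_distrib, hU2, ← Finset.sum_add_distrib]
    have hC : ∑ r ∈ Finset.range (n+1), (vseq (r+1) * Dfun n r + w r)
        = ∑ r ∈ Finset.range n, (vseq (r+2) * Dfun n (r+1) + w (r+1))
          + (vseq 1 * Dfun n 0 + w 0) := by
      rw [Finset.sum_range_succ' (fun r => vseq (r+1) * Dfun n r + w r) n]
    have hC2 : ∑ r ∈ Finset.range n, (vseq (r+2) * Dfun n (r+1) + w (r+1))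
        = 16 * ∑ r ∈ Finset.range n, vseq (r+1) * Dfun n (r+1) := by
      rw [Finset.mul_sum]
      exact Finset.sum_congr rfl fun r _ => hpt r
    have hIH : ∑ r ∈ Finset.range n, vseq (r+1) * Dfun n (r+1) + vseq 0 * Dfun n 0 = 16 ^ n := by
      rw [← Finset.sum_range_succ' (fun r => vseq r * Dfun n r) n]
      exact ih
    have z0 : w 0 = 0 := by simp [hwdef]
    rw [hC, hC2, z0, Dfun_zero n, Dfun_zero (n+1),
      show vseq 1 = 14 from rfl, show vseq 0 = 1 from rfl]
    rw [show vseq 0 = 1 from rfl, Dfun_zero n] at hIH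
    have : (16:ℤ) ^ (n+1) = 16 * 16 ^ n := by ring
    rw [this, ← hIH]
    have h2 : (2:ℤ) ^ (n+1) = 2 * 2 ^ n := by ring
    rw [h2]
    ring
end

section
/- Suppose n ≥ 2. Then for all a, b, c, d, x, y, z, w ∈ Kˣ: ℛ(U_1) ∘ ℛ(e) ∘ ℛ(U_1) = κ_L·ℛ(U_1), where κ_L = (ab·x⁻¹ + x·(ab)⁻¹)·(cd·y⁻¹ + y·(cd)⁻¹). -/
/-- The index set `I_n = {−2n+1, …, 2n}`, as a subtype of `ℤ`. -/
abbrev Pos (n : ℕ) : Type := ↥(Set.Icc (-2 * (n : ℤ) + 1) (2 * (n : ℤ)))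

/-- Basis labels for `V(n)`: functions `α : I_n → {1, 2}`, where the value
`(0 : Fin 2)` encodes the letter `1` and `(1 : Fin 2)` encodes the letter `2`. -/
abbrev Idx (n : ℕ) : Type := Pos n → Fin 2

/-- `V(n)`, the `K`-vector space with basis indexed by `Idx n`. -/
abbrev Vn (K : Type*) [Field K] (n : ℕ) : Type _ := Idx n →₀ K

/-- The cyclic successor on `I_n`: `i ↦ i + 1`, except `2n ↦ −2n+1`. -/
def nxt {n : ℕ} (i : Pos n) : Pos n :=
  if h : (i : ℤ) = 2 * (n : ℤ) then
    ⟨-2 * (n : ℤ) + 1, le_refl _, le_trans i.2.1 i.2.2⟩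
  else
    ⟨(i : ℤ) + 1, by have h1 := i.2.1; have h2 := i.2.2; constructor <;> omega⟩

/-- The letter (`1` or `2`) encoded by an element of `Fin 2`. -/
def lv (t : Fin 2) : ℤ := (t : ℤ) + 1

/-- The action of `R^q_i` on the basis vector `e_α`: it is `0` if
`α(i) = α(i')` (where `i' = nxt i`), and otherwise equals
`q^{2−α(i)}·e_β + q^{1−α(i)}·e_γ` where `β = α[i ↦ 1, i' ↦ 2]` and
`γ = α[i ↦ 2, i' ↦ 1]` (letters encoded in `Fin 2` as `0`, `1`). -/
noncomputable def Rbasis {K : Type*} [Field K] (n : ℕ) (q : Kˣ) (i : Pos n)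
    (α : Idx n) : Vn K n :=
  if α i = α (nxt i) then 0
  else ((q ^ (2 - lv (α i)) : Kˣ) : K) •
         Finsupp.single (Function.update (Function.update α i 0) (nxt i) 1) (1 : K) +
       ((q ^ (1 - lv (α i)) : Kˣ) : K) •
         Finsupp.single (Function.update (Function.update α i 1) (nxt i) 0) (1 : K)

/-- The operator `R^q_i` as a linear endomorphism of `V(n)`. -/
noncomputable def Rop {K : Type*} [Field K] (n : ℕ) (q : Kˣ) (i : Pos n) :
    Vn K n →ₗ[K] Vn K n :=
  Finsupp.linearCombination K (Rbasis n q i)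

/-- `R^q_j` for `j : ℤ`; it is the zero map when `j ∉ I_n`. -/
noncomputable def RopZ {K : Type*} [Field K] (n : ℕ) (q : Kˣ) (j : ℤ) :
    Vn K n →ₗ[K] Vn K n :=
  if h : -2 * (n : ℤ) + 1 ≤ j ∧ j ≤ 2 * (n : ℤ) then Rop n q ⟨j, h⟩ else 0

/-- `ℛ(U_i) = R^a_{−n−i} ∘ R^b_{−n+i} ∘ R^c_{n−i} ∘ R^d_{n+i}`. -/
noncomputable def RU {K : Type*} [Field K] (n : ℕ) (a b c d : Kˣ) (i : ℤ) :
    Vn K n →ₗ[K] Vn K n :=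
  RopZ n a (-(n : ℤ) - i) ∘ₗ RopZ n b (-(n : ℤ) + i) ∘ₗ
    RopZ n c ((n : ℤ) - i) ∘ₗ RopZ n d ((n : ℤ) + i)

/-- `ℛ(e) = R^x_{−n} ∘ R^y_{n}`. -/
noncomputable def Re {K : Type*} [Field K] (n : ℕ) (x y : Kˣ) :
    Vn K n →ₗ[K] Vn K n :=
  RopZ n x (-(n : ℤ)) ∘ₗ RopZ n y (n : ℤ)

/-- `ℛ(f) = R^z_0 ∘ R^w_{2n}`. -/
noncomputable def Rf {K : Type*} [Field K] (n : ℕ) (z w : Kˣ) :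
    Vn K n →ₗ[K] Vn K n :=
  RopZ n z 0 ∘ₗ RopZ n w (2 * (n : ℤ))



section Aux
variable {K : Type*} [Field K] {n : ℕ}

lemma Rop_single (q : Kˣ) (i : Pos n) (α : Idx n) :
    Rop n q i (Finsupp.single α 1) = Rbasis n q i α := by
  simp [Rop]

lemma Rbasis_apply_ne (q : Kˣ) (i : Pos n) (α : Idx n) (h : α i ≠ α (nxt i)) :
    Rbasis n q i α = ((q ^ (1 - lv (α i)) : Kˣ) : K) •
      ((q : K) • Finsupp.single (Function.update (Function.update α i 0) (nxt i) 1) (1 : K) +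
        Finsupp.single (Function.update (Function.update α i 1) (nxt i) 0) (1 : K)) := by
  rw [Rbasis, if_neg h, smul_add, smul_smul, ← Units.val_mul,
    show (2 : ℤ) - lv (α i) = 1 + (1 - lv (α i)) by ring, zpow_add, zpow_one, mul_comm q]

lemma lv_zero : lv 0 = 1 := rfl
lemma lv_one : lv 1 = 2 := rfl

/-- quadruple update -/
def U {n : ℕ} (i1 i2 i3 i4 : Pos n) (α : Idx n) (v1 v2 v3 v4 : Fin 2) : Idx n :=
  Function.update (Function.update (Function.update (Function.update α i1 v1) i2 v2) i3 v3) i4 v4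

variable {i1 i2 i3 i4 : Pos n}

lemma U_app1 (h12 : i1 ≠ i2) (h13 : i1 ≠ i3) (h14 : i1 ≠ i4) (α : Idx n) (v1 v2 v3 v4 : Fin 2) :
    U i1 i2 i3 i4 α v1 v2 v3 v4 i1 = v1 := by
  simp [U, Function.update_apply, h12, h13, h14]

lemma U_app2 (h23 : i2 ≠ i3) (h24 : i2 ≠ i4) (α : Idx n) (v1 v2 v3 v4 : Fin 2) :
    U i1 i2 i3 i4 α v1 v2 v3 v4 i2 = v2 := by
  simp [U, Function.update_apply, h23, h24]

lemma U_app3 (h34 : i3 ≠ i4) (α : Idx n) (v1 v2 v3 v4 : Fin 2) :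
    U i1 i2 i3 i4 α v1 v2 v3 v4 i3 = v3 := by
  simp [U, Function.update_apply, h34]

lemma U_app4 (α : Idx n) (v1 v2 v3 v4 : Fin 2) : U i1 i2 i3 i4 α v1 v2 v3 v4 i4 = v4 := by
  simp [U]

lemma U_upd12 (h13 : i1 ≠ i3) (h14 : i1 ≠ i4) (h23 : i2 ≠ i3) (h24 : i2 ≠ i4)
    (α : Idx n) (v1 v2 v3 v4 w1 w2 : Fin 2) :
    Function.update (Function.update (U i1 i2 i3 i4 α v1 v2 v3 v4) i1 w1) i2 w2 =
      U i1 i2 i3 i4 α w1 w2 v3 v4 := by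
  funext t
  simp only [U, Function.update_apply]
  split_ifs <;> simp_all

lemma U_upd23 (h12 : i1 ≠ i2) (h13 : i1 ≠ i3) (h24 : i2 ≠ i4) (h34 : i3 ≠ i4)
    (α : Idx n) (v1 v2 v3 v4 w1 w2 : Fin 2) :
    Function.update (Function.update (U i1 i2 i3 i4 α v1 v2 v3 v4) i2 w1) i3 w2 =
      U i1 i2 i3 i4 α v1 w1 w2 v4 := by
  funext t
  simp only [U, Function.update_apply]
  split_ifs <;> simp_all

lemma U_upd34 (α : Idx n) (v1 v2 v3 v4 w1 w2 : Fin 2) :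
    Function.update (Function.update (U i1 i2 i3 i4 α v1 v2 v3 v4) i3 w1) i4 w2 =
      U i1 i2 i3 i4 α v1 v2 w1 w2 := by
  funext t
  simp only [U, Function.update_apply]
  split_ifs <;> simp_all

lemma U_self (h12 : i1 ≠ i2) (h13 : i1 ≠ i3) (h14 : i1 ≠ i4)
    (h23 : i2 ≠ i3) (h24 : i2 ≠ i4) (h34 : i3 ≠ i4) (α : Idx n) :
    U i1 i2 i3 i4 α (α i1) (α i2) (α i3) (α i4) = α := by
  funext t
  simp only [U, Function.update_apply]
  split_ifs <;> simp_all

end Aux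

section TL
variable {K : Type*} [Field K] {n : ℕ} {i1 i2 i3 i4 : Pos n}

lemma RopA_U (h2 : nxt i1 = i2) (h12 : i1 ≠ i2) (h13 : i1 ≠ i3) (h14 : i1 ≠ i4)
    (h23 : i2 ≠ i3) (h24 : i2 ≠ i4)
    (q : Kˣ) (α : Idx n) (v1 v2 v3 v4 : Fin 2) (hv : v1 ≠ v2) :
    Rop n q i1 (Finsupp.single (U i1 i2 i3 i4 α v1 v2 v3 v4) 1) =
      ((q ^ (1 - lv v1) : Kˣ) : K) •
        ((q : K) • Finsupp.single (U i1 i2 i3 i4 α 0 1 v3 v4) (1 : K) +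
          Finsupp.single (U i1 i2 i3 i4 α 1 0 v3 v4) (1 : K)) := by
  rw [Rop_single,
    Rbasis_apply_ne q i1 _ (by rw [h2, U_app1 h12 h13 h14, U_app2 h23 h24]; exact hv),
    h2, U_app1 h12 h13 h14, U_upd12 h13 h14 h23 h24, U_upd12 h13 h14 h23 h24]

lemma RopA_U_eq (h2 : nxt i1 = i2) (h12 : i1 ≠ i2) (h13 : i1 ≠ i3) (h14 : i1 ≠ i4)
    (h23 : i2 ≠ i3) (h24 : i2 ≠ i4)
    (q : Kˣ) (α : Idx n) (v v3 v4 : Fin 2) :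
    Rop n q i1 (Finsupp.single (U i1 i2 i3 i4 α v v v3 v4) 1) = 0 := by
  rw [Rop_single, Rbasis, if_pos]
  rw [h2, U_app1 h12 h13 h14, U_app2 h23 h24]

lemma RopX_U (h3 : nxt i2 = i3) (h12 : i1 ≠ i2) (h13 : i1 ≠ i3)
    (h23 : i2 ≠ i3) (h24 : i2 ≠ i4) (h34 : i3 ≠ i4)
    (q : Kˣ) (α : Idx n) (v1 v2 v3 v4 : Fin 2) (hv : v2 ≠ v3) :
    Rop n q i2 (Finsupp.single (U i1 i2 i3 i4 α v1 v2 v3 v4) 1) =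
      ((q ^ (1 - lv v2) : Kˣ) : K) •
        ((q : K) • Finsupp.single (U i1 i2 i3 i4 α v1 0 1 v4) (1 : K) +
          Finsupp.single (U i1 i2 i3 i4 α v1 1 0 v4) (1 : K)) := by
  rw [Rop_single,
    Rbasis_apply_ne q i2 _ (by rw [h3, U_app2 h23 h24, U_app3 h34]; exact hv),
    h3, U_app2 h23 h24, U_upd23 h12 h13 h24 h34, U_upd23 h12 h13 h24 h34]

lemma RopX_U_eq (h3 : nxt i2 = i3) (h23 : i2 ≠ i3) (h24 : i2 ≠ i4) (h34 : i3 ≠ i4)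
    (q : Kˣ) (α : Idx n) (v1 v v4 : Fin 2) :
    Rop n q i2 (Finsupp.single (U i1 i2 i3 i4 α v1 v v v4) 1) = 0 := by
  rw [Rop_single, Rbasis, if_pos]
  rw [h3, U_app2 h23 h24, U_app3 h34]

lemma RopB_U (h4 : nxt i3 = i4) (h34 : i3 ≠ i4)
    (q : Kˣ) (α : Idx n) (v1 v2 v3 v4 : Fin 2) (hv : v3 ≠ v4) :
    Rop n q i3 (Finsupp.single (U i1 i2 i3 i4 α v1 v2 v3 v4) 1) =
      ((q ^ (1 - lv v3) : Kˣ) : K) •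
        ((q : K) • Finsupp.single (U i1 i2 i3 i4 α v1 v2 0 1) (1 : K) +
          Finsupp.single (U i1 i2 i3 i4 α v1 v2 1 0) (1 : K)) := by
  rw [Rop_single,
    Rbasis_apply_ne q i3 _ (by rw [h4, U_app3 h34, U_app4]; exact hv),
    h4, U_app3 h34, U_upd34, U_upd34]

lemma RopB_U_eq (h4 : nxt i3 = i4) (h34 : i3 ≠ i4)
    (q : Kˣ) (α : Idx n) (v1 v2 v : Fin 2) :
    Rop n q i3 (Finsupp.single (U i1 i2 i3 i4 α v1 v2 v v) 1) = 0 := by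
  rw [Rop_single, Rbasis, if_pos]
  rw [h4, U_app3 h34, U_app4]

lemma TL (h2 : nxt i1 = i2) (h3 : nxt i2 = i3) (h4 : nxt i3 = i4)
    (h12 : i1 ≠ i2) (h13 : i1 ≠ i3) (h14 : i1 ≠ i4)
    (h23 : i2 ≠ i3) (h24 : i2 ≠ i4) (h34 : i3 ≠ i4) (a b x : Kˣ) :
    Rop n a i1 ∘ₗ (Rop n b i3 ∘ₗ (Rop n x i2 ∘ₗ (Rop n a i1 ∘ₗ Rop n b i3))) =
      ((a : K) * (b : K) * ((x⁻¹ : Kˣ) : K) +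
        (x : K) * ((a⁻¹ : Kˣ) : K) * ((b⁻¹ : Kˣ) : K)) •
        (Rop n a i1 ∘ₗ Rop n b i3) := by
  apply Finsupp.lhom_ext
  intro α c
  suffices hkey : ∀ v1 v2 v3 v4 : Fin 2,
      (Rop n a i1 ∘ₗ (Rop n b i3 ∘ₗ (Rop n x i2 ∘ₗ (Rop n a i1 ∘ₗ Rop n b i3))))
        (Finsupp.single (U i1 i2 i3 i4 α v1 v2 v3 v4) c) =
      (((a : K) * (b : K) * ((x⁻¹ : Kˣ) : K) +
        (x : K) * ((a⁻¹ : Kˣ) : K) * ((b⁻¹ : Kˣ) : K)) •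
        (Rop n a i1 ∘ₗ Rop n b i3)) (Finsupp.single (U i1 i2 i3 i4 α v1 v2 v3 v4) c) by
    have h := hkey (α i1) (α i2) (α i3) (α i4)
    rwa [U_self h12 h13 h14 h23 h24 h34] at h
  intro v1 v2 v3 v4
  rw [← Finsupp.smul_single_one _ c, map_smul, map_smul]
  congr 1
  rcases eq_or_ne v3 v4 with hv34 | hv34
  · subst hv34
    simp only [LinearMap.comp_apply, LinearMap.smul_apply, RopB_U_eq h4 h34,
      map_zero, smul_zero]
  rcases eq_or_ne v1 v2 with hv12 | hv12
  · subst hv12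
    simp only [LinearMap.comp_apply, LinearMap.smul_apply,
      RopB_U h4 h34 b α _ _ _ _ hv34, map_smul, map_add, smul_add,
      RopA_U_eq h2 h12 h13 h14 h23 h24, smul_zero, map_zero, add_zero, zero_add]
  · simp only [LinearMap.comp_apply, LinearMap.smul_apply, map_add, map_smul,
      smul_add, smul_smul,
      RopB_U h4 h34 b α _ _ _ _ hv34,
      RopA_U h2 h12 h13 h14 h23 h24 a α _ _ _ _ hv12,
      RopA_U_eq h2 h12 h13 h14 h23 h24,
      RopB_U_eq h4 h34,
      RopX_U_eq h3 h23 h24 h34,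
      RopA_U h2 h12 h13 h14 h23 h24 a α _ _ _ _ (show (0:Fin 2) ≠ 1 by decide),
      RopA_U h2 h12 h13 h14 h23 h24 a α _ _ _ _ (show (1:Fin 2) ≠ 0 by decide),
      RopB_U h4 h34 b α _ _ _ _ (show (0:Fin 2) ≠ 1 by decide),
      RopB_U h4 h34 b α _ _ _ _ (show (1:Fin 2) ≠ 0 by decide),
      RopX_U h3 h12 h13 h23 h24 h34 x α _ _ _ _ (show (0:Fin 2) ≠ 1 by decide),
      RopX_U h3 h12 h13 h23 h24 h34 x α _ _ _ _ (show (1:Fin 2) ≠ 0 by decide),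
      lv_zero, lv_one, smul_zero, map_zero, add_zero, zero_add]
    simp only [show ((1:ℤ)-1) = 0 by norm_num, show ((1:ℤ)-2) = -1 by norm_num,
      zpow_zero, zpow_neg, zpow_one, Units.val_one, one_smul,
      Units.val_inv_eq_inv_val, smul_smul]
    module
end TL

section Comm
variable {K : Type*} [Field K] {n : ℕ}

lemma eval2 {α : Idx n} {p p' : Pos n} (s : Pos n) (h1 : s ≠ p) (h2 : s ≠ p') (v w : Fin 2) :
    Function.update (Function.update α p v) p' w s = α s := by
  simp [Function.update_apply, h1, h2]

lemma upd_block_comm {p p' s s' : Pos n} (h1 : p ≠ s) (h2 : p ≠ s') (h3 : p' ≠ s)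
    (h4 : p' ≠ s') (α : Idx n) (v w v' w' : Fin 2) :
    Function.update (Function.update (Function.update (Function.update α p v) p' w) s v') s' w' =
      Function.update (Function.update (Function.update (Function.update α s v') s' w') p v) p' w := by
  funext t
  simp only [Function.update_apply]
  split_ifs <;> simp_all

lemma Rop_single_eq (q : Kˣ) (i : Pos n) (α : Idx n) (h : α i = α (nxt i)) :
    Rop n q i (Finsupp.single α 1) = 0 := by
  rw [Rop_single, Rbasis, if_pos h]

lemma Rop_block_ne (q : Kˣ) (i : Pos n) {α : Idx n} {p p' : Pos n}
    (hp : i ≠ p) (hp' : i ≠ p') (hq : nxt i ≠ p) (hq' : nxt i ≠ p')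
    (v w : Fin 2) (hne : α i ≠ α (nxt i)) :
    Rop n q i (Finsupp.single (Function.update (Function.update α p v) p' w) 1) =
      ((q ^ (1 - lv (α i)) : Kˣ) : K) •
        ((q : K) • Finsupp.single (Function.update (Function.update
            (Function.update (Function.update α p v) p' w) i 0) (nxt i) 1) (1 : K) +
          Finsupp.single (Function.update (Function.update
            (Function.update (Function.update α p v) p' w) i 1) (nxt i) 0) (1 : K)) := by
  rw [Rop_single,
    Rbasis_apply_ne q i _ (by rw [eval2 i hp hp', eval2 (nxt i) hq hq']; exact hne),
    eval2 i hp hp']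

lemma Rop_block_eq (q : Kˣ) (i : Pos n) {α : Idx n} {p p' : Pos n}
    (hp : i ≠ p) (hp' : i ≠ p') (hq : nxt i ≠ p) (hq' : nxt i ≠ p')
    (v w : Fin 2) (heq : α i = α (nxt i)) :
    Rop n q i (Finsupp.single (Function.update (Function.update α p v) p' w) 1) = 0 := by
  rw [Rop_single, Rbasis, if_pos (by rw [eval2 i hp hp', eval2 (nxt i) hq hq']; exact heq)]

lemma Rop_comm (q r : Kˣ) (i j : Pos n) (hij : i ≠ j) (h1 : i ≠ nxt j)
    (h2 : nxt i ≠ j) (h3 : nxt i ≠ nxt j) :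
    Rop n q i ∘ₗ Rop n r j = Rop n r j ∘ₗ Rop n q i := by
  apply Finsupp.lhom_ext
  intro α cc
  rw [← Finsupp.smul_single_one α cc, map_smul, map_smul]
  congr 1
  simp only [LinearMap.comp_apply]
  by_cases hi : α i = α (nxt i) <;> by_cases hj : α j = α (nxt j)
  · rw [Rop_single_eq q i α hi, Rop_single_eq r j α hj, map_zero, map_zero]
  · rw [Rop_single_eq q i α hi, map_zero, Rop_single, Rbasis_apply_ne r j α hj]
    simp only [map_smul, map_add, Rop_block_eq q i hij h1 h2 h3 _ _ hi,
      smul_zero, add_zero, zero_add, map_zero]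
  · rw [Rop_single_eq r j α hj, map_zero, Rop_single, Rbasis_apply_ne q i α hi]
    simp only [map_smul, map_add,
      Rop_block_eq r j hij.symm h2.symm h1.symm h3.symm _ _ hj,
      smul_zero, add_zero, zero_add, map_zero]
  · rw [Rop_single, Rop_single, Rbasis_apply_ne q i α hi, Rbasis_apply_ne r j α hj]
    simp only [map_smul, map_add,
      Rop_block_ne q i hij h1 h2 h3 _ _ hi,
      Rop_block_ne r j hij.symm h2.symm h1.symm h3.symm _ _ hj,
      upd_block_comm hij h1 h2 h3, smul_add, smul_smul]
    module
end Comm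

section Main
variable {K : Type*} [Field K] {n : ℕ}

lemma mk_ne {j k : ℤ} {h : j ∈ Set.Icc (-2*(n:ℤ)+1) (2*(n:ℤ))}
    {h' : k ∈ Set.Icc (-2*(n:ℤ)+1) (2*(n:ℤ))} (hjk : j ≠ k) :
    (⟨j, h⟩ : Pos n) ≠ ⟨k, h'⟩ :=
  fun e => hjk (congrArg Subtype.val e)

lemma nxt_mk' {j k : ℤ} (h : j ∈ Set.Icc (-2*(n:ℤ)+1) (2*(n:ℤ)))
    (hne : j ≠ 2*(n:ℤ)) (hk : j + 1 = k)
    (h' : k ∈ Set.Icc (-2*(n:ℤ)+1) (2*(n:ℤ))) :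
    nxt (⟨j, h⟩ : Pos n) = ⟨k, h'⟩ := by
  subst hk
  rw [nxt, dif_neg hne]

lemma swap3 {M : Type*} [Monoid M] {a b : M} (h : a * b = b * a) (m : M) :
    a * (b * m) = b * (a * m) := by rw [← mul_assoc, h, mul_assoc]

end Main


/-- For `n ≥ 2`, `ℛ(U_1)∘ℛ(e)∘ℛ(U_1) = κ_L·ℛ(U_1)` where
`κ_L = (ab·x⁻¹ + x·(ab)⁻¹)·(cd·y⁻¹ + y·(cd)⁻¹)`. -/
theorem RU_Re_RU {K : Type*} [Field K] (n : ℕ) (hn : 2 ≤ n)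
    (a b c d x y z w : Kˣ) :
    RU (K := K) n a b c d 1 ∘ₗ Re n x y ∘ₗ RU n a b c d 1 =
      ((((a * b : Kˣ) : K) * ((x⁻¹ : Kˣ) : K) + (x : K) * (((a * b)⁻¹ : Kˣ) : K)) *
       (((c * d : Kˣ) : K) * ((y⁻¹ : Kˣ) : K) + (y : K) * (((c * d)⁻¹ : Kˣ) : K))) •
        RU n a b c d 1 := by
  have m1 : -(n:ℤ)-1 ∈ Set.Icc (-2*(n:ℤ)+1) (2*(n:ℤ)) := by simp only [Set.mem_Icc]; omega
  have m2 : -(n:ℤ) ∈ Set.Icc (-2*(n:ℤ)+1) (2*(n:ℤ)) := by simp only [Set.mem_Icc]; omega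
  have m3 : -(n:ℤ)+1 ∈ Set.Icc (-2*(n:ℤ)+1) (2*(n:ℤ)) := by simp only [Set.mem_Icc]; omega
  have m4 : -(n:ℤ)+2 ∈ Set.Icc (-2*(n:ℤ)+1) (2*(n:ℤ)) := by simp only [Set.mem_Icc]; omega
  have m5 : (n:ℤ)-1 ∈ Set.Icc (-2*(n:ℤ)+1) (2*(n:ℤ)) := by simp only [Set.mem_Icc]; omega
  have m6 : (n:ℤ) ∈ Set.Icc (-2*(n:ℤ)+1) (2*(n:ℤ)) := by simp only [Set.mem_Icc]; omega
  have m7 : (n:ℤ)+1 ∈ Set.Icc (-2*(n:ℤ)+1) (2*(n:ℤ)) := by simp only [Set.mem_Icc]; omega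
  have m8 : (n:ℤ)+2 ∈ Set.Icc (-2*(n:ℤ)+1) (2*(n:ℤ)) := by simp only [Set.mem_Icc]; omega
  set p1 : Pos n := ⟨-(n:ℤ)-1, m1⟩ with hp1
  set p2 : Pos n := ⟨-(n:ℤ), m2⟩ with hp2
  set p3 : Pos n := ⟨-(n:ℤ)+1, m3⟩ with hp3
  set p4 : Pos n := ⟨-(n:ℤ)+2, m4⟩ with hp4
  set q1 : Pos n := ⟨(n:ℤ)-1, m5⟩ with hq1
  set q2 : Pos n := ⟨(n:ℤ), m6⟩ with hq2
  set q3 : Pos n := ⟨(n:ℤ)+1, m7⟩ with hq3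
  set q4 : Pos n := ⟨(n:ℤ)+2, m8⟩ with hq4
  have np1 : nxt p1 = p2 := nxt_mk' m1 (by omega) (by ring) m2
  have np2 : nxt p2 = p3 := nxt_mk' m2 (by omega) (by ring) m3
  have np3 : nxt p3 = p4 := nxt_mk' m3 (by omega) (by ring) m4
  have nq1 : nxt q1 = q2 := nxt_mk' m5 (by omega) (by ring) m6
  have nq2 : nxt q2 = q3 := nxt_mk' m6 (by omega) (by ring) m7
  have nq3 : nxt q3 = q4 := nxt_mk' m7 (by omega) (by ring) m8
  have eA : RopZ (K := K) n a (-(n:ℤ) - 1) = Rop n a p1 := dif_pos m1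
  have eB : RopZ (K := K) n b (-(n:ℤ) + 1) = Rop n b p3 := dif_pos m3
  have eC : RopZ (K := K) n c ((n:ℤ) - 1) = Rop n c q1 := dif_pos m5
  have eD : RopZ (K := K) n d ((n:ℤ) + 1) = Rop n d q3 := dif_pos m7
  have eX : RopZ (K := K) n x (-(n:ℤ)) = Rop n x p2 := dif_pos m2
  have eY : RopZ (K := K) n y ((n:ℤ)) = Rop n y q2 := dif_pos m6
  rw [RU, Re, eA, eB, eC, eD, eX, eY]
  -- distinctness
  have d12 : p1 ≠ p2 := mk_ne (by omega)
  have d13 : p1 ≠ p3 := mk_ne (by omega)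
  have d14 : p1 ≠ p4 := mk_ne (by omega)
  have d23 : p2 ≠ p3 := mk_ne (by omega)
  have d24 : p2 ≠ p4 := mk_ne (by omega)
  have d34 : p3 ≠ p4 := mk_ne (by omega)
  have e12 : q1 ≠ q2 := mk_ne (by omega)
  have e13 : q1 ≠ q3 := mk_ne (by omega)
  have e14 : q1 ≠ q4 := mk_ne (by omega)
  have e23 : q2 ≠ q3 := mk_ne (by omega)
  have e24 : q2 ≠ q4 := mk_ne (by omega)
  have e34 : q3 ≠ q4 := mk_ne (by omega)
  have TL1 := TL np1 np2 np3 d12 d13 d14 d23 d24 d34 a b x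
  have TL2 := TL nq1 nq2 nq3 e12 e13 e14 e23 e24 e34 c d y
  -- commutation facts (each right-block letter commutes with each left-block one)
  have comm : ∀ (u v : Kˣ) (s t : Pos n), s ≠ t → s ≠ nxt t → nxt s ≠ t → nxt s ≠ nxt t →
      Rop n u s * Rop n v t = Rop n v t * Rop n u s := by
    intro u v s t w1 w2 w3 w4
    have := Rop_comm u v s t w1 w2 w3 w4
    simpa [← Module.End.mul_eq_comp] using this
  have hDX : Rop n d q3 * Rop n x p2 = Rop n x p2 * Rop n d q3 :=
    comm d x q3 p2 (mk_ne (by omega)) (by rw [np2]; exact mk_ne (by omega))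
      (by rw [nq3]; exact mk_ne (by omega)) (by rw [nq3, np2]; exact mk_ne (by omega))
  have hCX : Rop n c q1 * Rop n x p2 = Rop n x p2 * Rop n c q1 :=
    comm c x q1 p2 (mk_ne (by omega)) (by rw [np2]; exact mk_ne (by omega))
      (by rw [nq1]; exact mk_ne (by omega)) (by rw [nq1, np2]; exact mk_ne (by omega))
  have hYA : Rop n y q2 * Rop n a p1 = Rop n a p1 * Rop n y q2 :=
    comm y a q2 p1 (mk_ne (by omega)) (by rw [np1]; exact mk_ne (by omega))
      (by rw [nq2]; exact mk_ne (by omega)) (by rw [nq2, np1]; exact mk_ne (by omega))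
  have hDA : Rop n d q3 * Rop n a p1 = Rop n a p1 * Rop n d q3 :=
    comm d a q3 p1 (mk_ne (by omega)) (by rw [np1]; exact mk_ne (by omega))
      (by rw [nq3]; exact mk_ne (by omega)) (by rw [nq3, np1]; exact mk_ne (by omega))
  have hCA : Rop n c q1 * Rop n a p1 = Rop n a p1 * Rop n c q1 :=
    comm c a q1 p1 (mk_ne (by omega)) (by rw [np1]; exact mk_ne (by omega))
      (by rw [nq1]; exact mk_ne (by omega)) (by rw [nq1, np1]; exact mk_ne (by omega))
  have hYB : Rop n y q2 * Rop n b p3 = Rop n b p3 * Rop n y q2 :=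
    comm y b q2 p3 (mk_ne (by omega)) (by rw [np3]; exact mk_ne (by omega))
      (by rw [nq2]; exact mk_ne (by omega)) (by rw [nq2, np3]; exact mk_ne (by omega))
  have hDB : Rop n d q3 * Rop n b p3 = Rop n b p3 * Rop n d q3 :=
    comm d b q3 p3 (mk_ne (by omega)) (by rw [np3]; exact mk_ne (by omega))
      (by rw [nq3]; exact mk_ne (by omega)) (by rw [nq3, np3]; exact mk_ne (by omega))
  have hCB : Rop n c q1 * Rop n b p3 = Rop n b p3 * Rop n c q1 :=
    comm c b q1 p3 (mk_ne (by omega)) (by rw [np3]; exact mk_ne (by omega))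
      (by rw [nq1]; exact mk_ne (by omega)) (by rw [nq1, np3]; exact mk_ne (by omega))
  simp only [← Module.End.mul_eq_comp] at TL1 TL2 ⊢
  simp only [mul_assoc]
  rw [swap3 hDX, swap3 hCX, swap3 hYA, swap3 hDA, swap3 hCA, swap3 hYB, swap3 hDB,
    swap3 hCB]
  rw [show Rop n a p1 * (Rop n b p3 * (Rop n x p2 * (Rop n a p1 * (Rop n b p3 *
        (Rop n c q1 * (Rop n d q3 * (Rop n y q2 * (Rop n c q1 * Rop n d q3)))))))) =
      (Rop n a p1 * (Rop n b p3 * (Rop n x p2 * (Rop n a p1 * Rop n b p3)))) *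
        (Rop n c q1 * (Rop n d q3 * (Rop n y q2 * (Rop n c q1 * Rop n d q3)))) by
    simp only [mul_assoc]]
  rw [TL1, TL2, smul_mul_assoc, mul_smul_comm, smul_smul]
  simp only [mul_assoc, Units.val_mul, mul_inv_rev, Units.val_inv_eq_inv_val]
  module
end
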